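/- Let m ∈ ℝ, let 0 < T_i < T_{i−1}, let ŝ_{i−1} be a real random variable, and let s̃_i = m + Z where Z ∼ N(0, σ_i²) is independent of ŝ_{i−1}, with 1/σ_i² = 1/T_i − 1/T_{i−1}. Define ŝ_i = T_i · ( ŝ_{i−1}/T_{i−1} + s̃_i/σ_i² ). Then the conditional distribution of ŝ_i given ŝ_{i−1} is Gaussian with mean m + (T_i/T_{i−1})·(ŝ_{i−1} − m) and variance T_i·(T_{i−1} − T_i)/T_{i−1}. -/

import Mathlib

/-!
Since `Z` is independent of `W`, conditioning on `W = a` only freezes the first argument, so the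
conditional law of `ŝᵢ` is the image of `N(0, σ²)` under the affine map
`z ↦ Tᵢ (a / Tᵢ₋₁ + (m + z) / σ²)`, a Gaussian. The relation `1/σ² = 1/Tᵢ - 1/Tᵢ₋₁` turns its
mean and variance into those of the Brownian step.
-/

open MeasureTheory ProbabilityTheory
open scoped NNReal ENNReal

lemma gaussianReal_map_affine (μ : ℝ) (v : ℝ≥0) (c d : ℝ) :
    (gaussianReal μ v).map (fun z ↦ c * z + d)
      = gaussianReal (c * μ + d) (.mk (c ^ 2) (sq_nonneg c) * v) := by
  have hcomp : (fun z ↦ c * z + d) = (· + d) ∘ (c * ·) := rfl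
  rw [hcomp, ← Measure.map_map (measurable_add_const d) (measurable_const_mul c),
    gaussianReal_map_const_mul, gaussianReal_map_add_const]

lemma ProbabilityTheory.IndepFun.ae_condDistrib_comp_eq_map
    {Ω β γ δ : Type*} [MeasurableSpace Ω] [MeasurableSpace β] [MeasurableSpace γ]
    [MeasurableSpace δ] [StandardBorelSpace δ] [Nonempty δ]
    {P : Measure Ω} [IsProbabilityMeasure P] {X : Ω → β} {Z : Ω → γ}
    (hX : Measurable X) (hZ : Measurable Z) (hXZ : IndepFun X Z P)
    {g : β → γ → δ} (hg : Measurable (Function.uncurry g)) :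
    ∀ᵐ a ∂(P.map X), condDistrib (fun ω ↦ g (X ω) (Z ω)) X P a = (P.map Z).map (g a) := by
  set κ : Kernel β δ := (Kernel.id ×ₖ Kernel.const β (P.map Z)).map (Function.uncurry g)
  have hκ : ∀ a, κ a = (P.map Z).map (g a) := fun a ↦ by
    rw [Kernel.map_apply _ hg, Kernel.prod_apply, Kernel.id_apply, Kernel.const_apply,
      Measure.dirac_prod, Measure.map_map hg measurable_prodMk_left]
    rfl
  have hφ : Measurable (fun p : β × γ ↦ (p.1, g p.1 p.2)) := measurable_fst.prodMk hg
  have hjoint : P.map (fun ω ↦ (X ω, g (X ω) (Z ω)))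
      = (P.map X ⊗ₘ Kernel.const β (P.map Z)).map (fun p ↦ (p.1, g p.1 p.2)) := by
    rw [Measure.compProd_const,
      ← (indepFun_iff_map_prod_eq_prod_map_map hX.aemeasurable hZ.aemeasurable).mp hXZ,
      Measure.map_map hφ (hX.prodMk hZ)]
    rfl
  have hcompProd : P.map (fun ω ↦ (X ω, g (X ω) (Z ω))) = P.map X ⊗ₘ κ := by
    ext s hs
    rw [hjoint, Measure.map_apply hφ hs, Measure.compProd_apply (hφ hs),
      Measure.compProd_apply hs]
    refine lintegral_congr fun a ↦ ?_
    have hga : Measurable (g a) := hg.comp measurable_prodMk_left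
    rw [hκ, Kernel.const_apply, Measure.map_apply hga (measurable_prodMk_left hs)]
    rfl
  filter_upwards [condDistrib_ae_eq_of_measure_eq_compProd_of_measurable hX
    (hg.comp (hX.prodMk hZ)) hcompProd] with a ha
  exact ha.trans (hκ a)

/-- One step of the sequential precision-weighted Gaussian
mechanism has the Brownian-mechanism conditional law.  Let `m ∈ ℝ`,
`0 < Ti < Tprev`, let `W` (playing the role of `ŝ_{i-1}`) be a real random
variable, and let `s̃ = m + Z` with `Z ∼ N(0, σ²)` independent of `W`, where
`1/σ² = 1/Ti - 1/Tprev`.  Define `ŝᵢ = Ti * (W / Tprev + s̃ / σ²)`.  Then the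
conditional distribution of `ŝᵢ` given `W` is Gaussian with mean
`m + (Ti/Tprev) * (W - m)` and variance `Ti * (Tprev - Ti) / Tprev`. -/
theorem precision_weighted_step_conditional_gaussian
    {Ω : Type*} [MeasurableSpace Ω]
    (P : Measure Ω) [IsProbabilityMeasure P]
    (m Tprev Ti : ℝ) (hTi : 0 < Ti) (hTT : Ti < Tprev)
    (σ2 : ℝ) (hσ2 : 1 / σ2 = 1 / Ti - 1 / Tprev)
    (W Z : Ω → ℝ) (hW : Measurable W) (hZ : Measurable Z)
    (hZlaw : P.map Z = gaussianReal 0 σ2.toNNReal)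
    (hindep : IndepFun W Z P)
    (Si : Ω → ℝ) (hSi : ∀ ω, Si ω = Ti * (W ω / Tprev + (m + Z ω) / σ2)) :
    ∀ᵐ a ∂(P.map W),
      condDistrib Si W P a =
        gaussianReal (m + (Ti / Tprev) * (a - m))
          (Real.toNNReal (Ti * (Tprev - Ti) / Tprev)) := by
  have hTprev : 0 < Tprev := hTi.trans hTT
  have hσ2_pos : 0 < σ2 :=
    one_div_pos.mp (hσ2 ▸ sub_pos.mpr (one_div_lt_one_div_of_lt hTi hTT))
  have hσ2_mul : σ2 * (Tprev - Ti) = Ti * Tprev := by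
    field_simp at hσ2
    linarith
  have hstep : ∀ a, (fun z ↦ Ti * (a / Tprev + (m + z) / σ2))
      = fun z ↦ Ti / σ2 * z + (m + Ti / Tprev * (a - m)) := fun a ↦ by
    funext z
    field_simp
    linear_combination (-m) * hσ2_mul
  have hvar : (.mk ((Ti / σ2) ^ 2) (sq_nonneg _) * σ2.toNNReal : ℝ≥0)
      = (Ti * (Tprev - Ti) / Tprev).toNNReal := by
    rw [← NNReal.coe_inj, NNReal.coe_mul, NNReal.coe_mk, Real.coe_toNNReal _ hσ2_pos.le,
      Real.coe_toNNReal _ (by positivity)]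
    field_simp
    linear_combination (-1 : ℝ) * hσ2_mul
  rw [show Si = _ from funext hSi]
  filter_upwards [hindep.ae_condDistrib_comp_eq_map hW hZ
    (g := fun a z ↦ Ti * (a / Tprev + (m + z) / σ2)) (by fun_prop)] with a ha
  rw [ha, hZlaw, hstep, gaussianReal_map_affine, mul_zero, zero_add, hvar]
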